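/- Let X, Y : E → E be C² vector fields (ContDiff ℝ 2). Then for every x : E, div (VectorField.lieBracket ℝ X Y) (x) = fderiv ℝ (fun y => div Y y) x (X x) − fderiv ℝ (fun y => div X y) x (Y x). (The identity L_{[X,Y]}μ = (X(div Y) − Y(div X))μ underlying the fact that divergence-free fields form a Lie algebra.) -/

import Mathlib

/-! The divergence is the trace of the Jacobian. Differentiating `[X, Y] = DY·X − DX·Y` gives
`D[X, Y] = D²Y(·, X) − D²X(·, Y) + DY ∘ DX − DX ∘ DY`. The commutator `DY ∘ DX − DX ∘ DY` is
traceless, and by symmetry of second derivatives `tr D²Y(·, X) = tr D²Y(X, ·)`, which is the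
derivative of `tr DY = div Y` in the direction `X`. -/

open MeasureTheory

noncomputable section

variable {n : ℕ}

/-- The `i`-th standard basis vector of `EuclideanSpace ℝ (Fin n)`. -/
def e (i : Fin n) : EuclideanSpace ℝ (Fin n) := EuclideanSpace.single i 1

/-- The divergence of a vector field on `EuclideanSpace ℝ (Fin n)`. -/
def div (X : EuclideanSpace ℝ (Fin n) → EuclideanSpace ℝ (Fin n))
    (x : EuclideanSpace ℝ (Fin n)) : ℝ :=
  ∑ i, fderiv ℝ X x (e i) i

open VectorField

section LieBracket

variable {𝕜 : Type*} [NontriviallyNormedField 𝕜]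
  {E : Type*} [NormedAddCommGroup E] [NormedSpace 𝕜 E] {X Y : E → E} {x : E}

lemma fderiv_lieBracket (hX : ContDiffAt 𝕜 2 X x) (hY : ContDiffAt 𝕜 2 Y x) :
    fderiv 𝕜 (lieBracket 𝕜 X Y) x =
      (fderiv 𝕜 Y x).comp (fderiv 𝕜 X x) + (fderiv 𝕜 (fderiv 𝕜 Y) x).flip (X x)
        - ((fderiv 𝕜 X x).comp (fderiv 𝕜 Y x) + (fderiv 𝕜 (fderiv 𝕜 X) x).flip (Y x)) := by
  have hX' := (hX.fderiv_right (m := 1) le_rfl).differentiableAt one_ne_zero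
  have hY' := (hY.fderiv_right (m := 1) le_rfl).differentiableAt one_ne_zero
  have hX₀ := hX.differentiableAt two_ne_zero
  have hY₀ := hY.differentiableAt two_ne_zero
  rw [lieBracket_eq, fderiv_fun_sub (hY'.clm_apply hX₀) (hX'.clm_apply hY₀),
    fderiv_clm_apply hY' hX₀, fderiv_clm_apply hX' hY₀]

lemma IsSymmSndFDerivAt.flip_fderiv_fderiv (h : IsSymmSndFDerivAt 𝕜 X x) (v : E) :
    (fderiv 𝕜 (fderiv 𝕜 X) x).flip v = fderiv 𝕜 (fderiv 𝕜 X) x v := by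
  ext w
  exact h.eq w v

variable [CompleteSpace 𝕜] [FiniteDimensional 𝕜 E]

variable (𝕜 E) in
def traceCLM : (E →L[𝕜] E) →L[𝕜] 𝕜 :=
  LinearMap.toContinuousLinearMap ((LinearMap.trace 𝕜 E).comp (ContinuousLinearMap.coeLM 𝕜))

@[simp]
lemma traceCLM_apply (A : E →L[𝕜] E) : traceCLM 𝕜 E A = LinearMap.trace 𝕜 E A := rfl

variable (𝕜) in
def divergence (X : E → E) (x : E) : 𝕜 :=
  LinearMap.trace 𝕜 E (fderiv 𝕜 X x)

lemma fderiv_divergence_apply (hX : DifferentiableAt 𝕜 (fderiv 𝕜 X) x) (v : E) :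
    fderiv 𝕜 (divergence 𝕜 X) x v = LinearMap.trace 𝕜 E (fderiv 𝕜 (fderiv 𝕜 X) x v) := by
  have hdiv : HasFDerivAt (divergence 𝕜 X) ((traceCLM 𝕜 E).comp (fderiv 𝕜 (fderiv 𝕜 X) x)) x :=
    (traceCLM 𝕜 E).hasFDerivAt.comp x hX.hasFDerivAt
  simp [hdiv.fderiv]

theorem divergence_lieBracket (hX : ContDiffAt 𝕜 2 X x) (hY : ContDiffAt 𝕜 2 Y x)
    (h'X : IsSymmSndFDerivAt 𝕜 X x) (h'Y : IsSymmSndFDerivAt 𝕜 Y x) :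
    divergence 𝕜 (lieBracket 𝕜 X Y) x
      = fderiv 𝕜 (divergence 𝕜 Y) x (X x) - fderiv 𝕜 (divergence 𝕜 X) x (Y x) := by
  have hcomm : LinearMap.trace 𝕜 E ((fderiv 𝕜 Y x).comp (fderiv 𝕜 X x))
      = LinearMap.trace 𝕜 E ((fderiv 𝕜 X x).comp (fderiv 𝕜 Y x)) :=
    LinearMap.trace_comp_comm' _ _
  rw [divergence, fderiv_lieBracket hX hY, h'X.flip_fderiv_fderiv, h'Y.flip_fderiv_fderiv,
    fderiv_divergence_apply ((hY.fderiv_right (m := 1) le_rfl).differentiableAt one_ne_zero),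
    fderiv_divergence_apply ((hX.fderiv_right (m := 1) le_rfl).differentiableAt one_ne_zero)]
  simp only [ContinuousLinearMap.toLinearMap_sub, ContinuousLinearMap.toLinearMap_add, map_sub,
    map_add, hcomm]
  abel

end LieBracket

lemma EuclideanSpace.trace_eq_sum_apply_single {ι 𝕜 : Type*} [RCLike 𝕜] [Fintype ι]
    [DecidableEq ι] (A : EuclideanSpace 𝕜 ι →ₗ[𝕜] EuclideanSpace 𝕜 ι) :
    LinearMap.trace 𝕜 _ A = ∑ i, A (EuclideanSpace.single i 1) i := by
  rw [LinearMap.trace_eq_matrix_trace 𝕜 (EuclideanSpace.basisFun ι 𝕜).toBasis]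
  simp [Matrix.trace, LinearMap.toMatrix_apply]

lemma div_eq_divergence (X : EuclideanSpace ℝ (Fin n) → EuclideanSpace ℝ (Fin n)) :
    div X = divergence ℝ X :=
  funext fun _ => (EuclideanSpace.trace_eq_sum_apply_single _).symm

/-- `div [X, Y] = X (div Y) − Y (div X)` for `C²` vector fields. -/
theorem div_lieBracket (X Y : EuclideanSpace ℝ (Fin n) → EuclideanSpace ℝ (Fin n))
    (hX : ContDiff ℝ 2 X) (hY : ContDiff ℝ 2 Y) (x : EuclideanSpace ℝ (Fin n)) :
    div (VectorField.lieBracket ℝ X Y) x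
      = fderiv ℝ (fun y => div Y y) x (X x) - fderiv ℝ (fun y => div X y) x (Y x) := by
  rw [div_eq_divergence, div_eq_divergence, div_eq_divergence]
  exact divergence_lieBracket hX.contDiffAt hY.contDiffAt
    (hX.contDiffAt.isSymmSndFDerivAt (by simp)) (hY.contDiffAt.isSymmSndFDerivAt (by simp))
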